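/- Let n ≥ 2 and n ≥ m ≥ 1 be integers. If k ≥ 1 is odd, then r(S_n^m; k) ≥ k(n−1) + m + 2. -/

import Mathlib

open SimpleGraph

/-- The double star `S(n,m)`: two adjacent centers `0` and `1`, with `n` leaves
attached to `0` (vertices `2,…,n+1`) and `m` leaves attached to `1`
(vertices `n+2,…,n+m+1`). -/
def doubleStar (n m : ℕ) : SimpleGraph (Fin (n + m + 2)) :=
  SimpleGraph.fromRel (fun u v =>
    (u.val = 0 ∧ v.val = 1) ∨
    (u.val = 0 ∧ 2 ≤ v.val ∧ v.val ≤ n + 1) ∨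
    (u.val = 1 ∧ n + 2 ≤ v.val))

/-- The star `K_{1,n}` with center `0` and `n` leaves. -/
def starGraph (n : ℕ) : SimpleGraph (Fin (n + 1)) :=
  SimpleGraph.fromRel (fun u _ => u.val = 0)

/-- The subdivided star `S_n^m`, obtained from `K_{1,n}` by subdividing `m` edges each
exactly once: center `0`; subdivision vertices `1,…,m`; for `1 ≤ i ≤ m` the vertex `m+i`
is the leaf beyond subdivision vertex `i`; vertices `2m+1,…,n+m` are ordinary leaves. -/
def subdividedStar (n m : ℕ) : SimpleGraph (Fin (n + m + 1)) :=
  SimpleGraph.fromRel (fun u v =>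
    (u.val = 0 ∧ 1 ≤ v.val ∧ v.val ≤ m) ∨
    (1 ≤ u.val ∧ u.val ≤ m ∧ v.val = u.val + m) ∨
    (u.val = 0 ∧ 2 * m + 1 ≤ v.val))

/-- `K_N` colored by `c` with `k` colors contains a monochromatic copy of `H`. -/
def HasMonoCopy {W : Type} (H : SimpleGraph W) {N : ℕ} {α : Type}
    (c : Sym2 (Fin N) → α) : Prop :=
  ∃ (f : W ↪ Fin N) (i : α), ∀ v w : W, H.Adj v w → c s(f v, f w) = i

/-- Every `k`-coloring of the edges of `K_N` contains a monochromatic copy of `H`. -/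
def IsRamsey {W : Type} (H : SimpleGraph W) (k N : ℕ) : Prop :=
  ∀ c : Sym2 (Fin N) → Fin k, HasMonoCopy H c

/-- The `k`-color Ramsey number of `H`. -/
noncomputable def ramseyNumber {W : Type} (H : SimpleGraph W) (k : ℕ) : ℕ :=
  sInf {N | IsRamsey H k N}

/-- There is a list assignment of `k` colors to each edge of `K_N` such that every
coloring from the lists contains a monochromatic copy of `H`. -/
def IsListRamsey {W : Type} (H : SimpleGraph W) (k N : ℕ) : Prop :=
  ∃ L : Sym2 (Fin N) → Finset ℕ, (∀ e, (L e).card = k) ∧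
    ∀ c : Sym2 (Fin N) → ℕ, (∀ e, c e ∈ L e) → HasMonoCopy H c

/-- The `k`-color list Ramsey number of `H`. -/
noncomputable def listRamseyNumber {W : Type} (H : SimpleGraph W) (k : ℕ) : ℕ :=
  sInf {N | IsListRamsey H k N}

/-!
Upper bound, needed because `ramseyNumber` is an `sInf`, which is `0` if no `N` works: every
vertex `j > 0` of `S_n^m` has a unique neighbour `par j < j`, so `S_n^m` embeds greedily into any
graph having a nonempty vertex set in which all degrees are at least `n + m`. In a `k`-colouring
of `K_N` with `N = 2k(n+m)+2` some colour class has average degree above `2(n+m)`, and repeatedly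
deleting vertices of degree at most `n + m` leaves such a set.

Lower bound: split `k(n-1)+m+1` vertices into rows `R_a`, `a ∈ ZMod k`, of size `n-1` and a block
`A` of size `m+1`. Colour the edges inside `R_a` and between `R_a` and `A` by `a`, those inside `A`
by `0`, and those between `R_a` and `R_b` by the midpoint `(a+b)/2`, which exists as `k` is odd.
In colour `i` the `n+m` vertices of `R_i ∪ A` have no neighbours outside, so the connected
`S_n^m` cannot meet them; and a vertex of `R_a`, `a ≠ i`, has all its neighbours in the row
`R_{2i-a}`, too few for the centre of `S_n^m`, which has degree `n`.
-/

open Finset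

section ColorClass

variable {V α : Type}

def colorClass (c : Sym2 V → α) (i : α) : SimpleGraph V := fromEdgeSet {e | c e = i}

@[simp]
lemma colorClass_adj {c : Sym2 V → α} {i : α} {x y : V} :
    (colorClass c i).Adj x y ↔ x ≠ y ∧ c s(x, y) = i := by
  simp [colorClass, and_comm]

instance [DecidableEq V] [DecidableEq α] (c : Sym2 V → α) (i : α) :
    DecidableRel (colorClass c i).Adj :=
  fun _ _ => decidable_of_iff' _ colorClass_adj

lemma hasMonoCopy_iff_exists_isContained {W : Type} (H : SimpleGraph W) {N : ℕ}
    (c : Sym2 (Fin N) → α) : HasMonoCopy H c ↔ ∃ i, H ⊑ colorClass c i := by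
  simp only [HasMonoCopy, isContained_iff_exists_le_comap]
  rw [exists_comm]
  refine exists_congr fun i => exists_congr fun f => ⟨fun h v w hvw => ?_, fun h v w hvw => ?_⟩
  · exact colorClass_adj.2 ⟨f.injective.ne hvw.ne, h v w hvw⟩
  · exact (colorClass_adj.1 (h hvw)).2

lemma not_isRamsey_of_forall_free {W : Type} (H : SimpleGraph W) [Fintype V] [Fintype α]
    (c : Sym2 V → α) (hc : ∀ i, H.Free (colorClass c i)) :
    ¬ IsRamsey H (Fintype.card α) (Fintype.card V) := by
  intro hH
  let eV := Fintype.equivFin V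
  let eα := Fintype.equivFin α
  obtain ⟨i, hi⟩ := (hasMonoCopy_iff_exists_isContained H _).1
    (hH fun e => eα (c (e.map eV.symm)))
  let e : colorClass (fun e => eα (c (e.map eV.symm))) i ≃g colorClass c (eα.symm i) :=
    { eV.symm with map_rel_iff' := by simp [Equiv.eq_symm_apply] }
  exact hc _ (hi.trans e.isContained)

lemma IsRamsey.mono {W : Type} {H : SimpleGraph W} {k N M : ℕ} (h : IsRamsey H k N)
    (hNM : N ≤ M) : IsRamsey H k M := by
  intro c
  obtain ⟨f, i, hf⟩ := h fun e => c (e.map (Fin.castLE hNM))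
  exact ⟨f.trans (Fin.castLEEmb hNM), i, fun v w hvw => by simpa using hf v w hvw⟩

end ColorClass

section DenseSubset

variable {V : Type} [DecidableEq V] (G : SimpleGraph V) [DecidableRel G.Adj]

lemma sum_card_filter_adj_erase {s : Finset V} {u : V} (hu : u ∈ s) :
    ∑ v ∈ s, #{w ∈ s | G.Adj v w} =
      ∑ v ∈ s.erase u, #{w ∈ s.erase u | G.Adj v w} + 2 * #{w ∈ s | G.Adj u w} := by
  have hcard (v : V) :
      #{w ∈ s | G.Adj v w} = #{w ∈ s.erase u | G.Adj v w} + if G.Adj v u then 1 else 0 := by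
    rw [filter_erase]
    split_ifs with h
    · exact (card_erase_add_one (mem_filter.2 ⟨hu, h⟩)).symm
    · rw [erase_eq_of_notMem (fun h' => h (mem_filter.1 h').2), add_zero]
  have hdeg : #{w ∈ s | G.Adj u w} = #{v ∈ s.erase u | G.Adj v u} := by
    simp_rw [hcard u, G.loopless.irrefl u, if_false, add_zero, G.adj_comm]
  rw [← add_sum_erase s _ hu, sum_congr rfl fun v _ => hcard v, sum_add_distrib, sum_boole,
    Nat.cast_id, ← hdeg]
  ring

/-- Deleting a vertex of degree at most `d` lowers the degree sum by at most `2 d`. -/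
lemma exists_subset_forall_lt_card_filter_adj (d : ℕ) (s : Finset V)
    (hs : 2 * d * #s < ∑ v ∈ s, #{w ∈ s | G.Adj v w}) :
    ∃ t ⊆ s, t.Nonempty ∧ ∀ v ∈ t, d < #{w ∈ t | G.Adj v w} := by
  induction s using Finset.strongInduction with
  | H s ih =>
    by_cases hmin : ∀ v ∈ s, d < #{w ∈ s | G.Adj v w}
    · refine ⟨s, Subset.rfl, nonempty_iff_ne_empty.2 ?_, hmin⟩
      rintro rfl
      simp at hs
    · push Not at hmin
      obtain ⟨u, hu, hdeg⟩ := hmin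
      have hs' : 2 * d * #(s.erase u) < ∑ v ∈ s.erase u, #{w ∈ s.erase u | G.Adj v w} := by
        rw [sum_card_filter_adj_erase G hu] at hs
        have := card_erase_add_one hu
        nlinarith
      obtain ⟨t, hts, ht, hmin⟩ := ih _ (erase_ssubset hu) hs'
      exact ⟨t, hts.trans (erase_subset u s), ht, hmin⟩

end DenseSubset

section Pigeonhole

variable {V α : Type} [Fintype V] [DecidableEq V] [Fintype α] [DecidableEq α]

lemma sum_card_filter_colorClass_adj (c : Sym2 V → α) (v : V) :
    ∑ i, #{w | (colorClass c i).Adj v w} = Fintype.card V - 1 := by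
  rw [← card_univ, ← card_erase_of_mem (mem_univ v),
    card_eq_sum_card_fiberwise (f := fun w => c s(v, w)) (t := univ) fun _ _ => mem_univ _]
  refine sum_congr rfl fun i _ => congrArg card ?_
  ext w
  simp [ne_comm]

lemma exists_colorClass_lt_sum_card_filter_adj (c : Sym2 V → α) (d : ℕ)
    (h : 2 * d * Fintype.card α < Fintype.card V - 1) :
    ∃ i, 2 * d * Fintype.card V < ∑ v, #{w | (colorClass c i).Adj v w} := by
  have hV : 0 < Fintype.card V := by omega
  refine exists_lt_of_sum_lt (s := univ) ?_ |>.imp fun _ => And.right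
  rw [sum_comm, sum_const, card_univ, smul_eq_mul]
  simp_rw [sum_card_filter_colorClass_adj, sum_const, card_univ, smul_eq_mul]
  nlinarith

end Pigeonhole

def IsParentTree {p : ℕ} (H : SimpleGraph (Fin (p + 1))) (par : ℕ → ℕ) : Prop :=
  (∀ j, 0 < j → par j < j) ∧ ∀ u v : Fin (p + 1), u < v → (H.Adj u v ↔ u.val = par v)

namespace IsParentTree

variable {p : ℕ} {H : SimpleGraph (Fin (p + 1))} {par : ℕ → ℕ}
variable {V : Type} {G : SimpleGraph V}

lemma copy_mem_of_closed (hH : IsParentTree H par) (f : Copy H G) {S : Set V}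
    (hS : ∀ x y, G.Adj x y → x ∈ S → y ∈ S) (h0 : f 0 ∈ S) (v : Fin (p + 1)) : f v ∈ S := by
  obtain ⟨j, hj⟩ := v
  induction j using Nat.strong_induction_on with
  | _ j ih =>
    rcases j.eq_zero_or_pos with rfl | hj0
    · exact h0
    have hpar := hH.1 j hj0
    have hadj := (hH.2 ⟨par j, by omega⟩ ⟨j, hj⟩ hpar).2 rfl
    exact hS _ _ (f.toHom.map_adj hadj) (ih _ hpar _)

variable [DecidableEq V] [DecidableRel G.Adj]

lemma exists_partial_embedding (hpar : ∀ j, 0 < j → par j < j) {s : Finset V} (hs : s.Nonempty)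
    (hdeg : ∀ v ∈ s, p ≤ #{w ∈ s | G.Adj v w}) :
    ∀ q ≤ p, ∃ g : ℕ → V, (∀ j ≤ q, g j ∈ s) ∧ Set.InjOn g (Set.Iic q) ∧
      ∀ j ≤ q, 0 < j → G.Adj (g (par j)) (g j)
  | 0, _ => ⟨fun _ => hs.choose, fun _ _ => hs.choose_spec,
      fun a ha b hb _ => (Nat.le_zero.1 ha).trans (Nat.le_zero.1 hb).symm, by omega⟩
  | q + 1, hq => by
    obtain ⟨g, hgs, hinj, hadj⟩ := exists_partial_embedding hpar hs hdeg q (by omega)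
    have hparent : par (q + 1) ≤ q := Nat.lt_succ_iff.1 (hpar _ q.succ_pos)
    set u := g (par (q + 1))
    obtain ⟨w, hw, hwg⟩ : ∃ w ∈ s, G.Adj u w ∧ ∀ j ≤ q, g j ≠ w := by
      by_contra! hnew
      have hsub : {w ∈ s | G.Adj u w} ⊆ ((range (q + 1)).image g).erase u := fun w hw' => by
        obtain ⟨hw, huw⟩ := mem_filter.1 hw'
        obtain ⟨j, hj, rfl⟩ := hnew w hw huw
        exact mem_erase.2 ⟨huw.ne', mem_image_of_mem g (mem_range_succ_iff.2 hj)⟩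
      have : p < q + 1 := calc
        p ≤ #{w ∈ s | G.Adj u w} := hdeg u (hgs _ hparent)
        _ ≤ #(((range (q + 1)).image g).erase u) := card_le_card hsub
        _ < #((range (q + 1)).image g) :=
          card_erase_lt_of_mem (mem_image_of_mem g (mem_range_succ_iff.2 hparent))
        _ ≤ q + 1 := card_image_le.trans (card_range _).le
      omega
    refine ⟨Function.update g (q + 1) w, fun j hj => ?_, fun a ha b hb hab => ?_,
      fun j hj hj0 => ?_⟩
    · rcases hj.lt_or_eq with hj | rfl
      · rw [Function.update_of_ne hj.ne]; exact hgs j (by omega)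
      · rw [Function.update_self]; exact hw
    · simp only [Set.mem_Iic] at ha hb
      rcases ha.lt_or_eq with ha | rfl <;> rcases hb.lt_or_eq with hb | rfl
      · rw [Function.update_of_ne ha.ne, Function.update_of_ne hb.ne] at hab
        exact hinj (Set.mem_Iic.2 (by omega)) (Set.mem_Iic.2 (by omega)) hab
      · rw [Function.update_of_ne ha.ne, Function.update_self] at hab
        exact absurd hab (hwg.2 a (by omega))
      · rw [Function.update_of_ne hb.ne, Function.update_self] at hab
        exact absurd hab.symm (hwg.2 b (by omega))
      · rfl
    · rw [Function.update_of_ne (by have := hpar j hj0; omega)]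
      rcases hj.lt_or_eq with hj | rfl
      · rw [Function.update_of_ne hj.ne]; exact hadj j (by omega) hj0
      · rw [Function.update_self]; exact hwg.1

lemma isContained_of_le_card_filter_adj (hH : IsParentTree H par) {s : Finset V}
    (hs : s.Nonempty) (hdeg : ∀ v ∈ s, p ≤ #{w ∈ s | G.Adj v w}) : H ⊑ G := by
  obtain ⟨g, -, hinj, hadj⟩ := exists_partial_embedding hH.1 hs hdeg p le_rfl
  have hadj' {u v : Fin (p + 1)} (huv : u < v) (h : H.Adj u v) : G.Adj (g u) (g v) := by
    rw [(hH.2 u v huv).1 h]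
    exact hadj v (by omega) (by omega)
  refine isContained_iff_exists_le_comap.2 ⟨⟨fun v => g v, fun u v huv => Fin.ext ?_⟩, ?_⟩
  · exact hinj (Set.mem_Iic.2 (by omega)) (Set.mem_Iic.2 (by omega)) huv
  · intro u v h
    rcases lt_trichotomy u v with huv | rfl | huv
    · exact hadj' huv h
    · exact absurd h (H.loopless.irrefl u)
    · exact (hadj' huv h.symm).symm

lemma isRamsey (hH : IsParentTree H par) (k : ℕ) : IsRamsey H k (2 * k * p + 2) := by
  intro c
  obtain ⟨i, hi⟩ := exists_colorClass_lt_sum_card_filter_adj c p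
    (by simp only [Fintype.card_fin]; rw [mul_right_comm]; omega)
  obtain ⟨t, -, ht, hdeg⟩ := exists_subset_forall_lt_card_filter_adj (colorClass c i) p univ
    (by rwa [card_univ])
  exact (hasMonoCopy_iff_exists_isContained H c).2
    ⟨i, hH.isContained_of_le_card_filter_adj ht fun v hv => (hdeg v hv).le⟩

end IsParentTree

section SubdividedStar

variable {n m : ℕ}

instance : DecidableRel (subdividedStar n m).Adj :=
  fun _ _ => decidable_of_iff' _ (fromRel_adj _ _ _)

def subdividedStarParent (m j : ℕ) : ℕ := if m < j ∧ j ≤ 2 * m then j - m else 0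

lemma isParentTree_subdividedStar (n m : ℕ) :
    IsParentTree (subdividedStar n m) (subdividedStarParent m) := by
  refine ⟨fun j hj => ?_, fun u v huv => ?_⟩
  · unfold subdividedStarParent; split_ifs <;> omega
  · rw [Fin.lt_def] at huv
    simp only [subdividedStar, fromRel_adj, subdividedStarParent, ne_eq, Fin.ext_iff]
    split_ifs <;> omega

lemma le_card_filter_adj_subdividedStar_zero :
    n ≤ #{w | (subdividedStar n m).Adj 0 w} := by
  let A := Icc 1 m ∪ Icc (2 * m + 1) (n + m)
  have hA : ∀ j ∈ A, j < n + m + 1 := by simp only [A, mem_union, mem_Icc]; omega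
  calc n ≤ #A := by
        rw [card_union_of_disjoint (disjoint_left.2 fun j h1 h2 => by simp only [mem_Icc] at h1 h2; omega)]
        simp only [Nat.card_Icc]; omega
    _ = #(A.attachFin hA) := (card_attachFin A hA).symm
    _ ≤ _ := card_le_card fun v hv => by
        simp only [mem_attachFin, A, mem_union, mem_Icc] at hv
        simp only [mem_filter, mem_univ, true_and, subdividedStar, fromRel_adj, ne_eq, Fin.ext_iff,
          Fin.val_zero]
        omega

lemma subdividedStar_free_of_closed {V : Type} [Fintype V] (G : SimpleGraph V)
    [DecidableRel G.Adj] (S : Finset V) (hS : #S ≤ n + m)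
    (hclosed : ∀ x y, G.Adj x y → x ∈ S → y ∈ S) (hout : ∀ v ∉ S, #{w | G.Adj v w} < n) :
    (subdividedStar n m).Free G := by
  rintro ⟨f⟩
  by_cases h0 : f 0 ∈ S
  · have hmem := (isParentTree_subdividedStar n m).copy_mem_of_closed f (S := ↑S) hclosed h0
    have := card_le_card_of_injOn f (s := univ) (fun v _ => hmem v) f.injective.injOn
    simp only [card_univ, Fintype.card_fin] at this
    omega
  · have := card_le_card_of_injOn f (s := {w | (subdividedStar n m).Adj 0 w})
      (t := {y | G.Adj (f 0) y})
      (fun w hw => by simpa using f.toHom.map_adj (mem_filter.1 hw).2) f.injective.injOn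
    have := le_card_filter_adj_subdividedStar_zero (n := n) (m := m)
    have := hout _ h0
    omega

end SubdividedStar

section MidpointColoring

variable (R : Type) [Ring R] [Invertible (2 : R)] (X Y : Type)

/-- `R × X` is the union of the rows `{a} × X`, `a : R`, and `Y` is the extra block. -/
def midpointColor : R × X ⊕ Y → R × X ⊕ Y → R
  | .inl a, .inl b => midpoint R a.1 b.1
  | .inl a, .inr _ => a.1
  | .inr _, .inl b => b.1
  | .inr _, .inr _ => 0

lemma midpointColor_comm (x y : R × X ⊕ Y) :
    midpointColor R X Y x y = midpointColor R X Y y x := by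
  cases x <;> cases y <;> simp [midpointColor, midpoint_comm]

def midpointColoring : Sym2 (R × X ⊕ Y) → R :=
  Sym2.lift ⟨midpointColor R X Y, midpointColor_comm R X Y⟩

variable {R X Y} [Fintype R] [Fintype X] [Fintype Y]

lemma subdividedStar_free_midpointColoring {n m : ℕ} (hX : Fintype.card X < n)
    (hXY : Fintype.card X + Fintype.card Y ≤ n + m) (i : R) :
    (subdividedStar n m).Free (colorClass (midpointColoring R X Y) i) := by
  classical
  refine subdividedStar_free_of_closed _ (({i} ×ˢ univ).disjSum univ) ?_ ?_ ?_
  · simpa using hXY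
  · rintro (⟨a, _⟩ | _) (⟨b, _⟩ | _) hadj hx <;> simp_all [midpointColoring, midpointColor]
  · rintro (⟨a, x⟩ | y) hv
    · calc #{w | (colorClass (midpointColoring R X Y) i).Adj (.inl (a, x)) w}
          ≤ #(({Equiv.pointReflection i a} ×ˢ univ).disjSum (∅ : Finset Y)) := by
            refine card_le_card fun w hw => ?_
            rcases w with ⟨b, _⟩ | _ <;>
              simp_all [midpointColoring, midpointColor, midpoint_eq_iff']
        _ < n := by simpa using hX
    · simp at hv

end MidpointColoring

theorem not_isRamsey_subdividedStar {n m k : ℕ} (hn : 1 ≤ n) (hk : Odd k) :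
    ¬ IsRamsey (subdividedStar n m) k (k * (n - 1) + m + 1) := by
  have : NeZero k := ⟨hk.pos.ne'⟩
  let : Invertible (2 : ZMod k) := by
    have := invertibleOfCoprime (R := ZMod k) (Nat.coprime_two_left.2 hk)
    rwa [Nat.cast_ofNat] at this
  have hfree (i : ZMod k) : (subdividedStar n m).Free
      (colorClass (midpointColoring (ZMod k) (Fin (n - 1)) (Fin (m + 1))) i) :=
    subdividedStar_free_midpointColoring (by simp only [Fintype.card_fin]; omega)
      (by simp only [Fintype.card_fin]; omega) i
  simpa [add_assoc] using not_isRamsey_of_forall_free _ _ hfree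

theorem stmt_12_general (n m k : ℕ) (hn : 2 ≤ n) (hodd : Odd k) :
    ramseyNumber (subdividedStar n m) k ≥ k * (n - 1) + m + 2 :=
  le_csInf ⟨_, (isParentTree_subdividedStar n m).isRamsey k⟩ fun N hN => by
    by_contra! hlt
    exact not_isRamsey_subdividedStar (by omega) hodd (hN.mono (by omega))

/-- If `n ≥ 2`, `n ≥ m ≥ 1` and `k ≥ 1` is odd, then
`r(S_n^m; k) ≥ k(n−1) + m + 2`. -/
theorem stmt_12 (n m k : ℕ) (hn : 2 ≤ n) (hnm : m ≤ n) (hm : 1 ≤ m) (hk : 1 ≤ k)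
    (hodd : Odd k) :
    ramseyNumber (subdividedStar n m) k ≥ k * (n - 1) + m + 2 :=
  stmt_12_general n m k hn hodd
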